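/- Under the assumptions of the previous setup (Z binary, (Y(1),Y(0),U) independent of Z, (Y(1),Y(0)) conditionally independent of D given (Z,U), Y = D·Y(1)+(1−D)·Y(0)), one has E[(1−D)·g(Y) | Z=1] − E[(1−D)·g(Y) | Z=0] = −E[g(Y(0))·w(U)], where w(u) = P(D=1|Z=1,U=u) − P(D=1|Z=0,U=u). -/
import Mathlib


open Finset
open scoped Classical

/-- Probability of an event `A` under mass function `p` on a finite sample space. -/
noncomputable def prb {Ω : Type*} [Fintype Ω] (p : Ω → ℝ) (A : Ω → Prop) : ℝ :=
  ∑ ω, if A ω then p ω else 0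

/-- Expectation of a real random variable `X` under mass function `p`. -/
noncomputable def exv {Ω : Type*} [Fintype Ω] (p : Ω → ℝ) (X : Ω → ℝ) : ℝ :=
  ∑ ω, p ω * X ω

/-- Conditional probability `P(A | B)`. -/
noncomputable def cpr {Ω : Type*} [Fintype Ω] (p : Ω → ℝ) (A B : Ω → Prop) : ℝ :=
  prb p (fun ω => A ω ∧ B ω) / prb p B

/-- Conditional expectation `E[X | B]`. -/
noncomputable def cex {Ω : Type*} [Fintype Ω] (p : Ω → ℝ) (X : Ω → ℝ) (B : Ω → Prop) : ℝ :=
  (∑ ω, if B ω then p ω * X ω else 0) / prb p B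

section Aux

variable {Ω : Type*} [Fintype Ω] (p : Ω → ℝ)

lemma prb_congr (A B : Ω → Prop) (h : ∀ ω, A ω ↔ B ω) : prb p A = prb p B := by
  unfold prb
  exact Finset.sum_congr rfl fun ω _ => by simp only [h ω]

lemma prb_mono (hp : ∀ ω, 0 ≤ p ω) (A B : Ω → Prop) (h : ∀ ω, A ω → B ω) :
    prb p A ≤ prb p B := by
  unfold prb
  refine Finset.sum_le_sum fun ω _ => ?_
  by_cases hA : A ω
  · rw [if_pos hA, if_pos (h ω hA)]
  · rw [if_neg hA]
    split_ifs
    · exact hp ω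
    · exact le_refl 0

lemma group_sum {κ : Type*} (φ : Ω → κ) (s : Finset κ) (hs : ∀ ω, φ ω ∈ s)
    (f : Ω → ℝ) (G : κ → ℝ) (C : Ω → Prop)
    (hf : ∀ ω, C ω → f ω = p ω * G (φ ω)) (hf0 : ∀ ω, ¬ C ω → f ω = 0) :
    (∑ ω, f ω) = ∑ t ∈ s, G t * prb p (fun ω => φ ω = t ∧ C ω) := by
  unfold prb
  simp_rw [Finset.mul_sum, mul_ite, mul_zero]
  rw [Finset.sum_comm]
  refine Finset.sum_congr rfl fun ω _ => ?_
  by_cases hC : C ω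
  · rw [hf ω hC]
    have h1 : ∀ t ∈ s,
        (if φ ω = t ∧ C ω then G t * p ω else 0) = if φ ω = t then G t * p ω else 0 :=
      fun t _ => by simp [hC]
    rw [Finset.sum_congr rfl h1, Finset.sum_ite_eq]
    rw [if_pos (hs ω)]
    ring
  · rw [hf0 ω hC]
    exact (Finset.sum_eq_zero fun t _ => by simp [hC]).symm

end Aux

/-- E[(1−D)·g(Y)|Z=1] − E[(1−D)·g(Y)|Z=0] = −E[g(Y(0))·w(U)]. -/
theorem stmt2 {Ω ι : Type*} [Fintype Ω] [Fintype ι]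
    (p : Ω → ℝ) (hp : ∀ ω, 0 ≤ p ω) (hpsum : ∑ ω, p ω = 1)
    (Z D Y Y1 Y0 : Ω → ℝ) (U : Ω → ι)
    (hZbin : ∀ ω, Z ω = 0 ∨ Z ω = 1) (hDbin : ∀ ω, D ω = 0 ∨ D ω = 1)
    (hYobs : ∀ ω, Y ω = D ω * Y1 ω + (1 - D ω) * Y0 ω)
    (hpos : ∀ (z : ℝ) (u : ι), (z = 0 ∨ z = 1) →
      0 < prb p (fun ω => Z ω = z ∧ U ω = u))
    (hindep : ∀ (y1 y0 : ℝ) (u : ι) (z : ℝ),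
      prb p (fun ω => Y1 ω = y1 ∧ Y0 ω = y0 ∧ U ω = u ∧ Z ω = z) =
        prb p (fun ω => Y1 ω = y1 ∧ Y0 ω = y0 ∧ U ω = u) * prb p (fun ω => Z ω = z))
    (hcind : ∀ (y1 y0 d z : ℝ) (u : ι),
      cpr p (fun ω => Y1 ω = y1 ∧ Y0 ω = y0 ∧ D ω = d) (fun ω => Z ω = z ∧ U ω = u) =
        cpr p (fun ω => Y1 ω = y1 ∧ Y0 ω = y0) (fun ω => Z ω = z ∧ U ω = u) *
          cpr p (fun ω => D ω = d) (fun ω => Z ω = z ∧ U ω = u))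
    (w : ι → ℝ)
    (hw : ∀ u, w u = cpr p (fun ω => D ω = 1) (fun ω => Z ω = 1 ∧ U ω = u) -
                    cpr p (fun ω => D ω = 1) (fun ω => Z ω = 0 ∧ U ω = u))
    (g : ℝ → ℝ) :
    cex p (fun ω => (1 - D ω) * g (Y ω)) (fun ω => Z ω = 1) -
      cex p (fun ω => (1 - D ω) * g (Y ω)) (fun ω => Z ω = 0) =
    -exv p (fun ω => g (Y0 ω) * w (U ω)) := by
  rcases isEmpty_or_nonempty Ω with hΩ | hΩ
  · simp [cex, exv, prb]
  set φ : Ω → ℝ × ℝ × ι := fun ω => (Y1 ω, Y0 ω, U ω) with hφ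
  set S : Finset (ℝ × ℝ × ι) := Finset.univ.image φ with hS
  have hSmem : ∀ ω, φ ω ∈ S := fun ω => Finset.mem_image_of_mem φ (Finset.mem_univ ω)
  obtain ⟨u0⟩ : Nonempty ι := ⟨U (Classical.arbitrary Ω)⟩
  have hPz : ∀ z : ℝ, (z = 0 ∨ z = 1) → 0 < prb p (fun ω => Z ω = z) := fun z hz =>
    lt_of_lt_of_le (hpos z u0 hz) (prb_mono p hp _ _ fun ω hω => hω.1)
  -- D binary: P(D=0|B) = 1 - P(D=1|B)
  have hD01 : ∀ (z : ℝ) (u : ι), (z = 0 ∨ z = 1) →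
      cpr p (fun ω => D ω = 0) (fun ω => Z ω = z ∧ U ω = u) =
      1 - cpr p (fun ω => D ω = 1) (fun ω => Z ω = z ∧ U ω = u) := by
    intro z u hz
    have hB := hpos z u hz
    have hsum1 : prb p (fun ω => D ω = 0 ∧ (Z ω = z ∧ U ω = u)) +
        prb p (fun ω => D ω = 1 ∧ (Z ω = z ∧ U ω = u)) =
        prb p (fun ω => Z ω = z ∧ U ω = u) := by
      unfold prb
      rw [← Finset.sum_add_distrib]
      refine Finset.sum_congr rfl fun ω _ => ?_
      rcases hDbin ω with h | h <;> simp [h]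
    unfold cpr
    field_simp
    linarith
  -- key identity
  have key : ∀ (z : ℝ), (z = 0 ∨ z = 1) → ∀ (y1 y0 : ℝ) (u : ι),
      prb p (fun ω => Y1 ω = y1 ∧ Y0 ω = y0 ∧ U ω = u ∧ D ω = 0 ∧ Z ω = z) =
      prb p (fun ω => Y1 ω = y1 ∧ Y0 ω = y0 ∧ U ω = u) * prb p (fun ω => Z ω = z) *
        (1 - cpr p (fun ω => D ω = 1) (fun ω => Z ω = z ∧ U ω = u)) := by
    intro z hz y1 y0 u
    have hB := hpos z u hz
    have h1 : prb p (fun ω => Y1 ω = y1 ∧ Y0 ω = y0 ∧ U ω = u ∧ D ω = 0 ∧ Z ω = z) =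
        prb p (fun ω => (Y1 ω = y1 ∧ Y0 ω = y0 ∧ D ω = 0) ∧ (Z ω = z ∧ U ω = u)) :=
      prb_congr p _ _ fun ω => by tauto
    have h2 : prb p (fun ω => (Y1 ω = y1 ∧ Y0 ω = y0 ∧ D ω = 0) ∧ (Z ω = z ∧ U ω = u)) =
        cpr p (fun ω => Y1 ω = y1 ∧ Y0 ω = y0 ∧ D ω = 0) (fun ω => Z ω = z ∧ U ω = u)
          * prb p (fun ω => Z ω = z ∧ U ω = u) := by
      unfold cpr
      rw [div_mul_cancel₀ _ hB.ne']
    have h3 : prb p (fun ω => (Y1 ω = y1 ∧ Y0 ω = y0) ∧ (Z ω = z ∧ U ω = u)) =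
        prb p (fun ω => Y1 ω = y1 ∧ Y0 ω = y0 ∧ U ω = u) * prb p (fun ω => Z ω = z) := by
      rw [prb_congr p (fun ω => (Y1 ω = y1 ∧ Y0 ω = y0) ∧ (Z ω = z ∧ U ω = u))
        (fun ω => Y1 ω = y1 ∧ Y0 ω = y0 ∧ U ω = u ∧ Z ω = z) (fun ω => by tauto)]
      exact hindep y1 y0 u z
    rw [h1, h2, hcind y1 y0 0 z u, hD01 z u hz]
    unfold cpr
    rw [h3]
    field_simp
  -- grouped expectation
  have hexv : exv p (fun ω => g (Y0 ω) * w (U ω)) =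
      ∑ t ∈ S, (g t.2.1 * w t.2.2) *
        prb p (fun ω => Y1 ω = t.1 ∧ Y0 ω = t.2.1 ∧ U ω = t.2.2) := by
    unfold exv
    rw [group_sum p φ S hSmem (fun ω => p ω * (g (Y0 ω) * w (U ω)))
      (fun t => g t.2.1 * w t.2.2) (fun _ => True)
      (fun ω _ => rfl) (fun ω h => absurd trivial h)]
    refine Finset.sum_congr rfl fun t _ => ?_
    rw [prb_congr p (fun ω => φ ω = t ∧ True)
      (fun ω => Y1 ω = t.1 ∧ Y0 ω = t.2.1 ∧ U ω = t.2.2)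
      (fun ω => by simp [hφ, Prod.ext_iff]; try tauto)]
  -- conditional expectations
  have hcex : ∀ (z : ℝ), (z = 0 ∨ z = 1) →
      cex p (fun ω => (1 - D ω) * g (Y ω)) (fun ω => Z ω = z) =
      ∑ t ∈ S, g t.2.1 * prb p (fun ω => Y1 ω = t.1 ∧ Y0 ω = t.2.1 ∧ U ω = t.2.2) *
        (1 - cpr p (fun ω => D ω = 1) (fun ω => Z ω = z ∧ U ω = t.2.2)) := by
    intro z hz
    unfold cex
    rw [group_sum p φ S hSmem _ (fun t => g t.2.1) (fun ω => D ω = 0 ∧ Z ω = z) ?_ ?_,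
      Finset.sum_div]
    · refine Finset.sum_congr rfl fun t _ => ?_
      rw [prb_congr p (fun ω => φ ω = t ∧ (D ω = 0 ∧ Z ω = z))
        (fun ω => Y1 ω = t.1 ∧ Y0 ω = t.2.1 ∧ U ω = t.2.2 ∧ D ω = 0 ∧ Z ω = z)
        (fun ω => by simp [hφ, Prod.ext_iff]; try tauto),
        key z hz t.1 t.2.1 t.2.2]
      have hPzne := (hPz z hz).ne'
      field_simp
    · intro ω hC
      rw [if_pos hC.2]
      show p ω * ((1 - D ω) * g (Y ω)) = p ω * g (Y0 ω)
      rw [hYobs ω, hC.1]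
      norm_num
    · intro ω hC
      by_cases hZ : Z ω = z
      · rw [if_pos hZ]
        have hD : D ω = 1 := by
          rcases hDbin ω with h | h
          · exact absurd ⟨h, hZ⟩ hC
          · exact h
        show p ω * ((1 - D ω) * g (Y ω)) = 0
        rw [hD]
        ring
      · rw [if_neg hZ]
  rw [hcex 1 (Or.inr rfl), hcex 0 (Or.inl rfl), hexv, ← Finset.sum_sub_distrib,
    ← Finset.sum_neg_distrib]
  refine Finset.sum_congr rfl fun t _ => ?_
  rw [hw t.2.2]
  ring
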